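/- For all integers n ≥ 2 and 1 ≤ k ≤ n − 1 there exist unique unital R-algebra homomorphisms ψ_L : Ĥ_k → Ĥ_n and ψ_R : Ĥ_{n−k} → Ĥ_n such that: ψ_L(T_i) = T_i for all 1 ≤ i ≤ k − 1, ψ_L(T_0) = T_k⁻¹ T_{k+1}⁻¹ ⋯ T_{n−1}⁻¹ T_0 T_{n−1} ⋯ T_{k+1} T_k when k ≥ 2, and ψ_L(ρ) = ρ T_{n−1} T_{n−2} ⋯ T_k; and ψ_R(T_j) = T_{k+j} for all 1 ≤ j ≤ n − k − 1, ψ_R(T_0) = T_0 T_1 ⋯ T_{k−1} T_k T_{k−1}⁻¹ ⋯ T_1⁻¹ T_0⁻¹ when n − k ≥ 2, and ψ_R(ρ) = T_k⁻¹ T_{k−1}⁻¹ ⋯ T_1⁻¹ ρ. -/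

import Mathlib

/-!
Statement 6: existence and uniqueness of the parabolic embeddings `ψ_L` and `ψ_R`
for extended affine Hecke algebras.
-/

noncomputable section

namespace ParabolicInduction

/-- The ground ring `R = ℤ[q, q⁻¹]`. -/
abbrev R : Type := LaurentPolynomial ℤ

/-- The element `q ∈ R`. -/
def qR : R := LaurentPolynomial.T 1

/-- The element `q⁻¹ ∈ R`. -/
def qRinv : R := LaurentPolynomial.T (-1)

/-- Generators of the extended affine Hecke algebra `Ĥ_n`:  the `T_i` (present only
when `2 ≤ n`) and `ρ`, `ρ⁻¹`.  For `n = 1` only `ρ^{±1}` remain, so that `Ĥ_1` is the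
Laurent polynomial algebra `R[ρ, ρ⁻¹]`. -/
inductive HGen (n : ℕ) : Type
  | T (i : Fin n) (h : 2 ≤ n) : HGen n
  | rho : HGen n
  | rhoInv : HGen n

/-- Cyclic successor `i ↦ i + 1 (mod n)` on `Fin n`. -/
def cyc {n : ℕ} (i : Fin n) : Fin n := ⟨((i : ℕ) + 1) % n, Nat.mod_lt _ i.pos⟩

/-- The defining relations of the extended affine Hecke algebra `Ĥ_n`. -/
inductive HRel (n : ℕ) : FreeAlgebra R (HGen n) → FreeAlgebra R (HGen n) → Prop
  | quad (i : Fin n) (h : 2 ≤ n) :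
      HRel n ((FreeAlgebra.ι R (HGen.T i h) + algebraMap R _ qR) *
        (FreeAlgebra.ι R (HGen.T i h) - algebraMap R _ qRinv)) 0
  | comm (i j : Fin n) (h : 2 < n)
      (h1 : ((i : ℕ) : ZMod n) - ((j : ℕ) : ZMod n) ≠ 1)
      (h2 : ((i : ℕ) : ZMod n) - ((j : ℕ) : ZMod n) ≠ -1) :
      HRel n (FreeAlgebra.ι R (HGen.T i h.le) * FreeAlgebra.ι R (HGen.T j h.le))
        (FreeAlgebra.ι R (HGen.T j h.le) * FreeAlgebra.ι R (HGen.T i h.le))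
  | braid (i : Fin n) (h : 2 < n) :
      HRel n
        (FreeAlgebra.ι R (HGen.T i h.le) * FreeAlgebra.ι R (HGen.T (cyc i) h.le) *
          FreeAlgebra.ι R (HGen.T i h.le))
        (FreeAlgebra.ι R (HGen.T (cyc i) h.le) * FreeAlgebra.ι R (HGen.T i h.le) *
          FreeAlgebra.ι R (HGen.T (cyc i) h.le))
  | rho_rhoInv : HRel n (FreeAlgebra.ι R HGen.rho * FreeAlgebra.ι R HGen.rhoInv) 1
  | rhoInv_rho : HRel n (FreeAlgebra.ι R HGen.rhoInv * FreeAlgebra.ι R HGen.rho) 1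
  | conj (i : Fin n) (h : 2 ≤ n) :
      HRel n
        (FreeAlgebra.ι R HGen.rho * FreeAlgebra.ι R (HGen.T i h) * FreeAlgebra.ι R HGen.rhoInv)
        (FreeAlgebra.ι R (HGen.T (cyc i) h))

/-- The extended affine Hecke algebra `Ĥ_n`, presented by generators and relations. -/
abbrev Hecke (n : ℕ) : Type := RingQuot (HRel n)

/-- The generator `T_i` of `Ĥ_n` (indices read modulo `n`). -/
def HT {n : ℕ} (h : 2 ≤ n) (i : ℕ) : Hecke n :=
  RingQuot.mkAlgHom R (HRel n)
    (FreeAlgebra.ι R (HGen.T ⟨i % n, Nat.mod_lt _ (by omega)⟩ h))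

/-- The generator `ρ` of `Ĥ_n`. -/
def Hrho (n : ℕ) : Hecke n := RingQuot.mkAlgHom R (HRel n) (FreeAlgebra.ι R HGen.rho)

/-- The generator `ρ⁻¹` of `Ĥ_n`. -/
def HrhoInv (n : ℕ) : Hecke n := RingQuot.mkAlgHom R (HRel n) (FreeAlgebra.ι R HGen.rhoInv)

/-- The element `T_i⁻¹ = T_i + q - q⁻¹` of `Ĥ_n`. -/
def HTinv {n : ℕ} (h : 2 ≤ n) (i : ℕ) : Hecke n :=
  HT h i + algebraMap R (Hecke n) (qR - qRinv)

/-- The descending ordered product `T_a T_{a-1} ⋯ T_b` (empty, i.e. `1`, if `b > a`). -/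
def Tdesc {n : ℕ} (h : 2 ≤ n) (a b : ℕ) : Hecke n :=
  (((List.range' b (a + 1 - b)).reverse).map (HT h)).prod

/-- The ascending ordered product `T_a T_{a+1} ⋯ T_b` (empty, i.e. `1`, if `b < a`). -/
def Tasc {n : ℕ} (h : 2 ≤ n) (a b : ℕ) : Hecke n :=
  ((List.range' a (b + 1 - a)).map (HT h)).prod

/-- The descending ordered product `T_a⁻¹ T_{a-1}⁻¹ ⋯ T_b⁻¹` (empty if `b > a`). -/
def TinvDesc {n : ℕ} (h : 2 ≤ n) (a b : ℕ) : Hecke n :=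
  (((List.range' b (a + 1 - b)).reverse).map (HTinv h)).prod

/-- The ascending ordered product `T_a⁻¹ T_{a+1}⁻¹ ⋯ T_b⁻¹` (empty if `b < a`). -/
def TinvAsc {n : ℕ} (h : 2 ≤ n) (a b : ℕ) : Hecke n :=
  ((List.range' a (b + 1 - a)).map (HTinv h)).prod

/-- The defining conditions for the left parabolic embedding `ψ_L : Ĥ_k → Ĥ_n`:
`ψ_L(T_i) = T_i` for `1 ≤ i ≤ k - 1`,
`ψ_L(T_0) = T_k⁻¹ ⋯ T_{n-1}⁻¹ T_0 T_{n-1} ⋯ T_k` (when `2 ≤ k`), and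
`ψ_L(ρ) = ρ T_{n-1} ⋯ T_k`. -/
def IsPsiL (n k : ℕ) (hn : 2 ≤ n) (f : Hecke k →ₐ[R] Hecke n) : Prop :=
  (∀ (hk : 2 ≤ k) (i : ℕ), 1 ≤ i → i ≤ k - 1 → f (HT hk i) = HT hn i) ∧
  (∀ hk : 2 ≤ k, f (HT hk 0) = TinvAsc hn k (n - 1) * HT hn 0 * Tdesc hn (n - 1) k) ∧
  f (Hrho k) = Hrho n * Tdesc hn (n - 1) k

/-- The defining conditions for the right parabolic embedding `ψ_R : Ĥ_m → Ĥ_n`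
(where `m = n - k`):
`ψ_R(T_j) = T_{k+j}` for `1 ≤ j ≤ m - 1`,
`ψ_R(T_0) = T_0 T_1 ⋯ T_{k-1} T_k T_{k-1}⁻¹ ⋯ T_1⁻¹ T_0⁻¹` (when `2 ≤ m`), and
`ψ_R(ρ) = T_k⁻¹ T_{k-1}⁻¹ ⋯ T_1⁻¹ ρ`. -/
def IsPsiR (n k m : ℕ) (hn : 2 ≤ n) (g : Hecke m →ₐ[R] Hecke n) : Prop :=
  (∀ (hm : 2 ≤ m) (j : ℕ), 1 ≤ j → j ≤ m - 1 → g (HT hm j) = HT hn (k + j)) ∧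
  (∀ hm : 2 ≤ m, g (HT hm 0) = Tasc hn 0 (k - 1) * HT hn k * TinvDesc hn (k - 1) 0) ∧
  g (Hrho m) = TinvDesc hn k 1 * Hrho n

/-!
Conjugation by `ρ` shifts `T_i` to `T_{i+1}` and so permutes the defining relations of `Ĥ_k`:
each of them is the conjugate, by a power of `ρ`, of the quadratic relation of `T_1`, the braid
relation of `T_1, T_2`, or a commutation of `T_1` with some `T_j`, `j ≥ 3`. Hence an algebra map
out of `Ĥ_k` is given by images `t_i` and a unit `σ` with `σ t_i σ⁻¹ = t_{i+1}` that satisfy only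
these relations. For `ψ_L` and `ψ_R` the relations among the `t_i`, `i ≠ 0`, hold in `Ĥ_n`, and the
conjugation identities reduce to `c T_j = T_{j+1} c` for `c = T_a T_{a+1} ⋯ T_b` and `a ≤ j < b`
(and its descending analogue), which follows from the braid and far commutation relations.
Uniqueness holds because `Ĥ_k` is generated by the `T_i` and `ρ^{±1}`.
-/

lemma mul_add_sub_eq_one_of_quadratic {A : Type*} [Ring A] {a c c' : A} (hc : Commute c a)
    (hcc' : c * c' = 1) (h : (a + c) * (a - c') = 0) : a * (a + (c - c')) = 1 :=
  calc a * (a + (c - c')) = (a + c) * (a - c') + c * c' := by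
        rw [add_mul, mul_sub, mul_sub, hc.eq]; noncomm_ring
    _ = 1 := by rw [h, hcc', zero_add]

section Relations
variable {n : ℕ}

lemma qR_mul_qRinv : qR * qRinv = 1 := by
  rw [qR, qRinv, ← LaurentPolynomial.T_add]; norm_num [LaurentPolynomial.T_zero]

lemma HT_self (h : 2 ≤ n) : HT h n = HT h 0 := by
  simp only [HT, Nat.mod_self, Nat.zero_mod]

lemma mkAlgHom_T (h : 2 ≤ n) (i : Fin n) :
    RingQuot.mkAlgHom R (HRel n) (FreeAlgebra.ι R (HGen.T i h)) = HT h i := by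
  simp only [HT, Nat.mod_eq_of_lt i.isLt]

lemma HT_quad (h : 2 ≤ n) (i : ℕ) :
    (HT h i + algebraMap R (Hecke n) qR) * (HT h i - algebraMap R (Hecke n) qRinv) = 0 := by
  simpa [HT] using RingQuot.mkAlgHom_rel R (HRel.quad ⟨i % n, Nat.mod_lt _ (by omega)⟩ h)

lemma HT_mul_HTinv (h : 2 ≤ n) (i : ℕ) : HT h i * HTinv h i = 1 := by
  rw [HTinv, map_sub]
  exact mul_add_sub_eq_one_of_quadratic (Algebra.commutes _ _)
    (by rw [← map_mul, qR_mul_qRinv, map_one]) (HT_quad h i)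

lemma HTinv_mul_HT (h : 2 ≤ n) (i : ℕ) : HTinv h i * HT h i = 1 := by
  rw [HTinv, add_mul, Algebra.commutes, ← mul_add, ← HTinv, HT_mul_HTinv]

lemma HT_braid (h : 2 < n) (i : ℕ) :
    HT h.le i * HT h.le (i + 1) * HT h.le i = HT h.le (i + 1) * HT h.le i * HT h.le (i + 1) := by
  simpa [HT, cyc, Nat.add_mod] using
    RingQuot.mkAlgHom_rel R (HRel.braid ⟨i % n, Nat.mod_lt _ (by omega)⟩ h)

lemma rho_mul_rhoInv (n : ℕ) : Hrho n * HrhoInv n = 1 := by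
  simpa [Hrho, HrhoInv] using RingQuot.mkAlgHom_rel R (HRel.rho_rhoInv (n := n))

lemma rhoInv_mul_rho (n : ℕ) : HrhoInv n * Hrho n = 1 := by
  simpa [Hrho, HrhoInv] using RingQuot.mkAlgHom_rel R (HRel.rhoInv_rho (n := n))

def unitRho (n : ℕ) : (Hecke n)ˣ := ⟨Hrho n, HrhoInv n, rho_mul_rhoInv n, rhoInv_mul_rho n⟩

lemma semiconjBy_rho_HT (h : 2 ≤ n) (i : ℕ) : SemiconjBy (Hrho n) (HT h i) (HT h (i + 1)) := by
  have hconj : Hrho n * HT h i * HrhoInv n = HT h (i + 1) := by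
    simpa [HT, Hrho, HrhoInv, cyc, Nat.add_mod] using
      RingQuot.mkAlgHom_rel R (HRel.conj ⟨i % n, Nat.mod_lt _ (by omega)⟩ h)
  rw [SemiconjBy, ← hconj, mul_assoc _ (HrhoInv n), rhoInv_mul_rho, mul_one]

lemma natCast_sub_natCast_ne {i j : ℕ} (hij : i + 2 ≤ j) (hji : j + 2 ≤ i + n) {e : ℤ}
    (he : |e| ≤ 1) : (i : ZMod n) - j ≠ e := by
  intro H
  have hdvd : (n : ℤ) ∣ i - j - e :=
    (ZMod.intCast_zmod_eq_zero_iff_dvd _ n).mp (by push_cast; rw [H, sub_self])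
  have := Int.eq_zero_of_abs_lt_dvd hdvd (abs_lt.mpr ⟨by grind, by grind⟩)
  grind

lemma HT_commute (h : 2 ≤ n) {i j : ℕ} (hij : i + 2 ≤ j) (hji : j + 2 ≤ i + n) :
    Commute (HT h i) (HT h j) := by
  have hne : ∀ e : ℤ, |e| ≤ 1 → ((i % n : ℕ) : ZMod n) - ((j % n : ℕ) : ZMod n) ≠ e := by
    simpa only [ZMod.natCast_mod] using fun e he => natCast_sub_natCast_ne hij hji he
  simpa [HT, Commute, SemiconjBy] using RingQuot.mkAlgHom_rel R
    (HRel.comm ⟨i % n, Nat.mod_lt _ (by omega)⟩ ⟨j % n, Nat.mod_lt _ (by omega)⟩ (by omega)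
      (by simpa using hne 1 (by simp)) (by simpa using hne (-1) (by simp)))

end Relations

lemma List.prod_map_mul_prod_reverse_map {M ι : Type*} [Monoid M] {f g : ι → M}
    (hfg : ∀ i, f i * g i = 1) (l : List ι) : (l.map f).prod * (l.reverse.map g).prod = 1 := by
  induction l with
  | nil => simp
  | cons a l ih =>
    rw [List.map_cons, List.prod_cons, List.reverse_cons, List.map_append, List.prod_append,
      mul_assoc, ← mul_assoc (l.map f).prod, ih]
    simp [hfg a]

lemma SemiconjBy.list_prod_map {M ι : Type*} [Monoid M] {c : M} {f g : ι → M} {l : List ι}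
    (hfg : ∀ x ∈ l, SemiconjBy c (f x) (g x)) : SemiconjBy c (l.map f).prod (l.map g).prod := by
  induction l with
  | nil => exact SemiconjBy.one_right c
  | cons a l ih =>
    simp only [List.map_cons, List.prod_cons]
    exact (hfg a List.mem_cons_self).mul_right (ih fun x hx => hfg x (List.mem_cons_of_mem a hx))

section Products
variable {n : ℕ} (h : 2 ≤ n) {a b : ℕ}

lemma Tasc_cons (hab : a ≤ b) : Tasc h a b = HT h a * Tasc h (a + 1) b := by
  rw [Tasc, Tasc, show b + 1 - a = (b - a) + 1 by omega, List.range'_succ,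
    show b + 1 - (a + 1) = b - a by omega, List.map_cons, List.prod_cons]

lemma Tasc_succ (hab : a ≤ b + 1) : Tasc h a (b + 1) = Tasc h a b * HT h (b + 1) := by
  rw [Tasc, Tasc, show b + 1 + 1 - a = (b + 1 - a) + 1 by omega, List.range'_1_concat,
    show a + (b + 1 - a) = b + 1 by omega, List.map_append, List.prod_append]
  simp

lemma Tdesc_succ (hab : b ≤ a + 1) : Tdesc h (a + 1) b = HT h (a + 1) * Tdesc h a b := by
  rw [Tdesc, Tdesc, show a + 1 + 1 - b = (a + 1 - b) + 1 by omega, List.range'_1_concat,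
    show b + (a + 1 - b) = a + 1 by omega, List.reverse_append, List.map_append, List.prod_append]
  simp

lemma Tdesc_eq_mul (hab : b ≤ a) : Tdesc h a b = Tdesc h a (b + 1) * HT h b := by
  rw [Tdesc, Tdesc, show a + 1 - b = (a - b) + 1 by omega, List.range'_succ, List.reverse_cons,
    List.map_append, List.prod_append, show a + 1 - (b + 1) = a - b by omega]
  simp

lemma Tasc_succ_succ :
    Tasc h (a + 1) (b + 1) = ((List.range' a (b + 1 - a)).map fun j => HT h (j + 1)).prod := by
  rw [Tasc, show b + 1 + 1 - (a + 1) = b + 1 - a by omega, List.range'_succ_left, List.map_map]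
  rfl

lemma Tdesc_succ_succ : Tdesc h (a + 1) (b + 1) =
    ((List.range' b (a + 1 - b)).reverse.map fun j => HT h (j + 1)).prod := by
  rw [Tdesc, show a + 1 + 1 - (b + 1) = a + 1 - b by omega, List.range'_succ_left,
    ← List.map_reverse, List.map_map]
  rfl

def unitTasc (a b : ℕ) : (Hecke n)ˣ where
  val := Tasc h a b
  inv := TinvDesc h b a
  val_inv := List.prod_map_mul_prod_reverse_map (HT_mul_HTinv h) _
  inv_val := by
    have := List.prod_map_mul_prod_reverse_map (HTinv_mul_HT h) (List.range' a (b + 1 - a)).reverse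
    rwa [List.reverse_reverse] at this

def unitTdesc (a b : ℕ) : (Hecke n)ˣ where
  val := Tdesc h a b
  inv := TinvAsc h b a
  val_inv := by
    have := List.prod_map_mul_prod_reverse_map (HT_mul_HTinv h) (List.range' b (a + 1 - b)).reverse
    rwa [List.reverse_reverse] at this
  inv_val := List.prod_map_mul_prod_reverse_map (HTinv_mul_HT h) _

lemma commute_Tasc {x : Hecke n} (hx : ∀ j, a ≤ j → j ≤ b → Commute x (HT h j)) :
    Commute x (Tasc h a b) :=
  Commute.list_prod_right _ _ fun y hy => by
    obtain ⟨j, hj, rfl⟩ := List.mem_map.mp hy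
    rw [List.mem_range'_1] at hj
    exact hx j hj.1 (by omega)

lemma commute_Tdesc {x : Hecke n} (hx : ∀ j, b ≤ j → j ≤ a → Commute x (HT h j)) :
    Commute x (Tdesc h a b) :=
  Commute.list_prod_right _ _ fun y hy => by
    obtain ⟨j, hj, rfl⟩ := List.mem_map.mp hy
    rw [List.mem_reverse, List.mem_range'_1] at hj
    exact hx j hj.1 (by omega)

lemma semiconjBy_rho_Tasc : SemiconjBy (Hrho n) (Tasc h a b) (Tasc h (a + 1) (b + 1)) := by
  rw [Tasc_succ_succ]
  exact SemiconjBy.list_prod_map fun j _ => semiconjBy_rho_HT h j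

lemma semiconjBy_rho_Tdesc : SemiconjBy (Hrho n) (Tdesc h a b) (Tdesc h (a + 1) (b + 1)) := by
  rw [Tdesc_succ_succ]
  exact SemiconjBy.list_prod_map fun j _ => semiconjBy_rho_HT h j

lemma semiconjBy_Tasc_HT (hspan : b + 2 ≤ a + n) {j : ℕ} (haj : a ≤ j) (hjb : j < b) :
    SemiconjBy (Tasc h a b) (HT h j) (HT h (j + 1)) := by
  obtain ⟨d, rfl⟩ := Nat.exists_eq_add_of_le haj
  induction d generalizing a with
  | zero =>
    rw [Tasc_cons h (by omega), Tasc_cons h (by omega), add_zero]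
    have hc : Commute (HT h a) (Tasc h (a + 1 + 1) b) :=
      commute_Tasc h fun i hi _ => HT_commute h (by omega) (by omega)
    calc HT h a * (HT h (a + 1) * Tasc h (a + 1 + 1) b) * HT h a
        = HT h a * HT h (a + 1) * (Tasc h (a + 1 + 1) b * HT h a) := by simp only [mul_assoc]
      _ = HT h a * HT h (a + 1) * HT h a * Tasc h (a + 1 + 1) b := by rw [← hc.eq, ← mul_assoc]
      _ = HT h (a + 1) * (HT h a * (HT h (a + 1) * Tasc h (a + 1 + 1) b)) := by
          rw [HT_braid (n := n) (by omega)]; simp only [mul_assoc]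
  | succ d ih =>
    have ih' := ih (a := a + 1) (by omega) (by omega) (by omega)
    rw [show a + 1 + d = a + (d + 1) by omega] at ih'
    rw [Tasc_cons h (by omega)]
    exact SemiconjBy.mul_left (HT_commute h (by omega) (by omega)) ih'

lemma semiconjBy_Tdesc_HT (hspan : a + 2 ≤ b + n) {j : ℕ} (hbj : b ≤ j) (hja : j < a) :
    SemiconjBy (Tdesc h a b) (HT h (j + 1)) (HT h j) := by
  obtain ⟨d, rfl⟩ := Nat.exists_eq_add_of_le hbj
  induction d generalizing b with
  | zero =>
    rw [Tdesc_eq_mul h (by omega), Tdesc_eq_mul h (b := b + 1) (by omega), add_zero]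
    have hc : Commute (Tdesc h a (b + 1 + 1)) (HT h b) :=
      (commute_Tdesc h fun i hi _ => HT_commute h (by omega) (by omega)).symm
    calc Tdesc h a (b + 1 + 1) * HT h (b + 1) * HT h b * HT h (b + 1)
        = Tdesc h a (b + 1 + 1) * (HT h (b + 1) * HT h b * HT h (b + 1)) := by
          simp only [mul_assoc]
      _ = (Tdesc h a (b + 1 + 1) * HT h b) * (HT h (b + 1) * HT h b) := by
          rw [← HT_braid (n := n) (by omega)]; simp only [mul_assoc]
      _ = HT h b * (Tdesc h a (b + 1 + 1) * HT h (b + 1) * HT h b) := by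
          rw [hc.eq]; simp only [mul_assoc]
  | succ d ih =>
    have ih' := ih (b := b + 1) (by omega) (by omega) (by omega)
    rw [show b + 1 + d = b + (d + 1) by omega] at ih'
    rw [Tdesc_eq_mul h (by omega)]
    exact SemiconjBy.mul_left ih' (HT_commute h (by omega) (by omega))

lemma semiconjBy_Tasc_Tasc (hspan : b + 3 ≤ a + n) :
    SemiconjBy (Tasc h a (b + 1)) (Tasc h a b) (Tasc h (a + 1) (b + 1)) := by
  rw [Tasc_succ_succ, Tasc]
  exact SemiconjBy.list_prod_map fun j hj => by
    rw [List.mem_range'_1] at hj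
    exact semiconjBy_Tasc_HT h (by omega) hj.1 (by omega)

lemma semiconjBy_Tdesc_Tdesc (hspan : a + 3 ≤ b + n) :
    SemiconjBy (Tdesc h (a + 1) b) (Tdesc h (a + 1) (b + 1)) (Tdesc h a b) := by
  rw [Tdesc_succ_succ, Tdesc]
  exact SemiconjBy.list_prod_map fun j hj => by
    rw [List.mem_reverse, List.mem_range'_1] at hj
    exact semiconjBy_Tdesc_HT h (by omega) hj.1 (by omega)

lemma Tasc_mul_HT_mul_TinvDesc (hab : a ≤ b) (hspan : b + 3 ≤ a + n) :
    Tasc h a b * HT h (b + 1) * TinvDesc h b a =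
      TinvDesc h (b + 1) (a + 1) * HT h a * Tasc h (a + 1) (b + 1) := by
  set X := unitTasc h a b
  set Y := unitTasc h (a + 1) (b + 1)
  have key : (Y : Hecke n) * (X * HT h (b + 1)) = HT h a * Y * X :=
    calc (Y : Hecke n) * (X * HT h (b + 1)) = Y * Tasc h a (b + 1) := by
          rw [Tasc_succ h (a := a) (b := b) (by omega)]; rfl
      _ = Tasc h a (b + 1) * X := (semiconjBy_Tasc_Tasc h hspan).eq.symm
      _ = HT h a * Y * X := by rw [Tasc_cons h (a := a) (b := b + 1) (by omega)]; rfl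
  calc Tasc h a b * HT h (b + 1) * TinvDesc h b a
      = ↑Y⁻¹ * (Y * (X * HT h (b + 1))) * ↑X⁻¹ := by rw [Units.inv_mul_cancel_left]; rfl
    _ = TinvDesc h (b + 1) (a + 1) * HT h a * Tasc h (a + 1) (b + 1) := by
        rw [key, ← mul_assoc, Units.mul_inv_cancel_right, ← mul_assoc]; rfl

lemma Tdesc_mul_HT_mul_TinvAsc (hba : b ≤ a) (hspan : a + 3 ≤ b + n) :
    Tdesc h (a + 1) (b + 1) * HT h b * TinvAsc h (b + 1) (a + 1) =
      TinvAsc h b a * HT h (a + 1) * Tdesc h a b := by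
  set X := unitTdesc h (a + 1) (b + 1)
  set Y := unitTdesc h a b
  have key : (Y : Hecke n) * (X * HT h b) = HT h (a + 1) * Y * X :=
    calc (Y : Hecke n) * (X * HT h b) = Y * Tdesc h (a + 1) b := by
          rw [Tdesc_eq_mul h (a := a + 1) (b := b) (by omega)]; rfl
      _ = Tdesc h (a + 1) b * X := (semiconjBy_Tdesc_Tdesc h hspan).eq.symm
      _ = HT h (a + 1) * Y * X := by rw [Tdesc_succ h (a := a) (b := b) (by omega)]; rfl
  calc Tdesc h (a + 1) (b + 1) * HT h b * TinvAsc h (b + 1) (a + 1)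
      = ↑Y⁻¹ * (Y * (X * HT h b)) * ↑X⁻¹ := by rw [Units.inv_mul_cancel_left]; rfl
    _ = TinvAsc h b a * HT h (a + 1) * Tdesc h a b := by
        rw [key, ← mul_assoc, Units.mul_inv_cancel_right, ← mul_assoc]; rfl

end Products

/-- `(j + k + 1 - i) % k` is the index that the cyclic shift taking `1` to `i` takes to `j`. -/
lemma three_le_mod_of_not_adjacent {k i j : ℕ} (hi : i < k) (hj : j < k) (hij : i ≠ j)
    (h1 : (i : ZMod k) - j ≠ 1) (h2 : (i : ZMod k) - j ≠ -1) : 3 ≤ (j + k + 1 - i) % k := by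
  set r := (j + k + 1 - i) % k with hr
  have hcast : (r : ZMod k) = j + 1 - i := by
    rw [hr, ZMod.natCast_mod, Nat.cast_sub (by omega)]
    push_cast
    rw [ZMod.natCast_self, add_zero]
  by_contra hlt
  obtain h | h | h : r = 0 ∨ r = 1 ∨ r = 2 := by omega
  · exact h1 (by rw [h, Nat.cast_zero] at hcast; linear_combination hcast)
  · rw [h, Nat.cast_one, eq_sub_iff_add_eq, add_comm, add_left_inj] at hcast
    have := (ZMod.natCast_eq_natCast_iff' i j k).mp hcast
    rw [Nat.mod_eq_of_lt hi, Nat.mod_eq_of_lt hj] at this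
    exact hij this
  · exact h2 (by rw [h, Nat.cast_two] at hcast; linear_combination hcast)

section Lift
variable {A : Type*} [Ring A] [Algebra R A] {k : ℕ}

def heckeGenImage (k : ℕ) (t : ℕ → A) (σ : Aˣ) : HGen k → A
  | .T i _ => t i
  | .rho => σ
  | .rhoInv => ↑σ⁻¹

structure SatisfiesHeckeRelations (k : ℕ) (t : ℕ → A) (σ : Aˣ) : Prop where
  semiconj : 2 ≤ k → ∀ i < k, SemiconjBy (σ : A) (t i) (t ((i + 1) % k))
  quad : 2 ≤ k → (t 1 + algebraMap R A qR) * (t 1 - algebraMap R A qRinv) = 0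
  braid : 2 < k → t 1 * t 2 * t 1 = t 2 * t 1 * t 2
  commute : ∀ j, 3 ≤ j → j < k → Commute (t 1) (t j)

namespace SatisfiesHeckeRelations
variable {t : ℕ → A} {σ : Aˣ}

lemma conj_pow_smul (H : SatisfiesHeckeRelations k t σ) (hk : 2 ≤ k) (m : ℕ) {i : ℕ}
    (hi : i < k) :
    ConjAct.toConjAct σ ^ m • t i = t ((i + m) % k) := by
  induction m with
  | zero => rw [pow_zero, one_smul, add_zero, Nat.mod_eq_of_lt hi]
  | succ m ih =>
    rw [pow_succ', mul_smul, ih, ConjAct.units_smul_def, ConjAct.ofConjAct_toConjAct,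
      (H.semiconj hk _ (Nat.mod_lt _ (by omega))).eq, Units.mul_inv_cancel_right, Nat.mod_add_mod,
      add_assoc]

lemma conj_pow_smul_one (H : SatisfiesHeckeRelations k t σ) (hk : 2 ≤ k) {i : ℕ} (hi : i < k) :
    ConjAct.toConjAct σ ^ (i + (k - 1)) • t 1 = t i := by
  rw [H.conj_pow_smul hk _ (by omega), show 1 + (i + (k - 1)) = i + k by omega, Nat.add_mod_right,
    Nat.mod_eq_of_lt hi]

lemma respects (H : SatisfiesHeckeRelations k t σ) ⦃x y : FreeAlgebra R (HGen k)⦄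
    (hxy : HRel k x y) :
    FreeAlgebra.lift R (heckeGenImage k t σ) x = FreeAlgebra.lift R (heckeGenImage k t σ) y := by
  cases hxy with
  | quad i hk =>
    simp only [map_mul, map_add, map_sub, map_zero, FreeAlgebra.lift_ι_apply, AlgHom.commutes,
      heckeGenImage]
    have := congrArg (MulSemiringAction.toAlgHom R A (ConjAct.toConjAct σ ^ ((i : ℕ) + (k - 1))))
      (H.quad hk)
    simpa only [map_mul, map_add, map_sub, map_zero, AlgHom.commutes,
      MulSemiringAction.toAlgHom_apply, H.conj_pow_smul_one hk i.isLt] using this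
  | comm i j hk h1 h2 =>
    simp only [map_mul, FreeAlgebra.lift_ι_apply, heckeGenImage]
    obtain rfl | hij := eq_or_ne i j
    · rfl
    have hij' : (i : ℕ) ≠ j := Fin.val_ne_of_ne hij
    have h3 := three_le_mod_of_not_adjacent i.isLt j.isLt hij' h1 h2
    have := congrArg (MulSemiringAction.toAlgHom R A (ConjAct.toConjAct σ ^ ((i : ℕ) + (k - 1))))
      (H.commute _ h3 (Nat.mod_lt _ (by omega))).eq
    simp only [map_mul, MulSemiringAction.toAlgHom_apply, H.conj_pow_smul_one hk.le i.isLt,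
      H.conj_pow_smul hk.le _ (Nat.mod_lt _ (by omega : 0 < k))] at this
    rwa [Nat.mod_add_mod, show j + k + 1 - i + (i + (k - 1)) = j + k + k by omega,
      Nat.add_mod_right, Nat.add_mod_right, Nat.mod_eq_of_lt j.isLt] at this
  | braid i hk =>
    simp only [map_mul, FreeAlgebra.lift_ι_apply, heckeGenImage, cyc]
    have := congrArg (MulSemiringAction.toAlgHom R A (ConjAct.toConjAct σ ^ ((i : ℕ) + (k - 1))))
      (H.braid hk)
    simp only [map_mul, MulSemiringAction.toAlgHom_apply, H.conj_pow_smul_one hk.le i.isLt,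
      H.conj_pow_smul hk.le _ (show 2 < k by omega)] at this
    rwa [show 2 + ((i : ℕ) + (k - 1)) = i + 1 + k by omega, Nat.add_mod_right] at this
  | rho_rhoInv => simp [heckeGenImage]
  | rhoInv_rho => simp [heckeGenImage]
  | conj i hk =>
    simp only [map_mul, FreeAlgebra.lift_ι_apply, heckeGenImage, cyc]
    rw [(H.semiconj hk i i.isLt).eq, Units.mul_inv_cancel_right]

def lift (H : SatisfiesHeckeRelations k t σ) : Hecke k →ₐ[R] A :=
  RingQuot.liftAlgHom R ⟨FreeAlgebra.lift R (heckeGenImage k t σ), H.respects⟩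

lemma lift_HT (H : SatisfiesHeckeRelations k t σ) (hk : 2 ≤ k) (i : ℕ) :
    H.lift (HT hk i) = t (i % k) := by
  rw [lift, HT, RingQuot.liftAlgHom_mkAlgHom_apply, FreeAlgebra.lift_ι_apply]
  rfl

lemma lift_rho (H : SatisfiesHeckeRelations k t σ) : H.lift (Hrho k) = σ := by
  rw [lift, Hrho, RingQuot.liftAlgHom_mkAlgHom_apply, FreeAlgebra.lift_ι_apply]
  rfl

end SatisfiesHeckeRelations

lemma Hecke.algHom_ext {B : Type*} [Semiring B] [Algebra R B] {f g : Hecke k →ₐ[R] B}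
    (hT : ∀ (hk : 2 ≤ k) (i : ℕ), i < k → f (HT hk i) = g (HT hk i))
    (hρ : f (Hrho k) = g (Hrho k)) : f = g := by
  refine RingQuot.ringQuot_ext' R _ _ (FreeAlgebra.hom_ext (funext fun x => ?_))
  cases x with
  | T i hk => simpa only [Function.comp_apply, AlgHom.comp_apply, mkAlgHom_T] using hT hk i i.isLt
  | rho => exact hρ
  | rhoInv =>
    have hf := congrArg f (rhoInv_mul_rho k)
    have hg := congrArg g (rho_mul_rhoInv k)
    rw [map_mul, map_one] at hf hg
    exact left_inv_eq_right_inv (hρ ▸ hf) hg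

end Lift

section PsiL
variable {n k : ℕ} (hn : 2 ≤ n)

def psiLT (k i : ℕ) : Hecke n :=
  if i = 0 then TinvAsc hn k (n - 1) * HT hn 0 * Tdesc hn (n - 1) k else HT hn i

def psiLRho (k : ℕ) : (Hecke n)ˣ := unitRho n * unitTdesc hn (n - 1) k

lemma psiLT_of_ne_zero {i : ℕ} (hi : i ≠ 0) : psiLT hn k i = HT hn i := if_neg hi

lemma semiconjBy_psiLRho_psiLT_zero :
    SemiconjBy (psiLRho hn k : Hecke n) (psiLT hn k 0) (HT hn 1) := by
  set U := unitTdesc hn (n - 1) k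
  have hU : SemiconjBy (U : Hecke n) (↑U⁻¹ * HT hn 0 * U) (HT hn 0) := by
    rw [SemiconjBy, ← mul_assoc, ← mul_assoc, Units.mul_inv, one_mul]
  exact (semiconjBy_rho_HT hn 0).mul_left hU

lemma semiconjBy_psiLRho_HT {i : ℕ} (hi : 1 ≤ i) (hik : i + 2 ≤ k) :
    SemiconjBy (psiLRho hn k : Hecke n) (HT hn i) (HT hn (i + 1)) :=
  (semiconjBy_rho_HT hn i).mul_left
    (commute_Tdesc hn fun _ _ _ => HT_commute hn (by omega) (by omega)).symm

lemma semiconjBy_psiLRho_HT_pred (hk : 2 ≤ k) (hkn : k ≤ n - 1) :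
    SemiconjBy (psiLRho hn k : Hecke n) (HT hn (k - 1)) (psiLT hn k 0) := by
  set U := unitTdesc hn (n - 1) k
  set U₂ := unitTdesc hn (n - 2) (k - 1)
  have hconj : (U : Hecke n) * HT hn (k - 1) * ↑U⁻¹ = ↑U₂⁻¹ * HT hn (n - 1) * U₂ := by
    have := Tdesc_mul_HT_mul_TinvAsc hn (a := n - 2) (b := k - 1) (by omega) (by omega)
    rwa [show n - 2 + 1 = n - 1 by omega, show k - 1 + 1 = k by omega] at this
  have hU : SemiconjBy (U : Hecke n) (HT hn (k - 1)) (↑U₂⁻¹ * HT hn (n - 1) * U₂) := by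
    rw [SemiconjBy, ← hconj, Units.inv_mul_cancel_right]
  have hρU : SemiconjBy (Hrho n) (U₂ : Hecke n) U := by
    have := semiconjBy_rho_Tdesc hn (a := n - 2) (b := k - 1)
    rwa [show n - 2 + 1 = n - 1 by omega, show k - 1 + 1 = k by omega] at this
  have hρT : SemiconjBy (Hrho n) (HT hn (n - 1)) (HT hn 0) := by
    have := semiconjBy_rho_HT hn (n - 1)
    rwa [Nat.sub_add_cancel (by omega), HT_self] at this
  exact ((hρU.units_inv_right.mul_right hρT).mul_right hρU).mul_left hU

lemma satisfiesHeckeRelations_psiL (hkn : k ≤ n - 1) :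
    SatisfiesHeckeRelations k (psiLT hn k) (psiLRho hn k) where
  semiconj hk i hi := by
    obtain rfl | hi0 := eq_or_ne i 0
    · rw [zero_add, Nat.mod_eq_of_lt (by omega), psiLT_of_ne_zero hn one_ne_zero]
      exact semiconjBy_psiLRho_psiLT_zero hn
    obtain hik | hik := Nat.lt_or_ge (i + 1) k
    · rw [Nat.mod_eq_of_lt hik, psiLT_of_ne_zero hn hi0, psiLT_of_ne_zero hn (by omega)]
      exact semiconjBy_psiLRho_HT hn (by omega) (by omega)
    · rw [show i + 1 = k by omega, Nat.mod_self, psiLT_of_ne_zero hn hi0, show i = k - 1 by omega]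
      exact semiconjBy_psiLRho_HT_pred hn hk hkn
  quad _ := by
    rw [psiLT_of_ne_zero hn one_ne_zero]
    exact HT_quad hn 1
  braid hk := by
    rw [psiLT_of_ne_zero hn one_ne_zero, psiLT_of_ne_zero hn two_ne_zero]
    exact HT_braid (n := n) (by omega) 1
  commute j hj hjk := by
    rw [psiLT_of_ne_zero hn one_ne_zero, psiLT_of_ne_zero hn (by omega)]
    exact HT_commute hn (by omega) (by omega)

def psiL (hkn : k ≤ n - 1) : Hecke k →ₐ[R] Hecke n :=
  (satisfiesHeckeRelations_psiL hn hkn).lift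

lemma isPsiL_psiL (hkn : k ≤ n - 1) : IsPsiL n k hn (psiL hn hkn) := by
  refine ⟨fun hk i hi hik => ?_, fun hk => ?_, SatisfiesHeckeRelations.lift_rho _⟩
  · rw [psiL, SatisfiesHeckeRelations.lift_HT, Nat.mod_eq_of_lt (by omega),
      psiLT_of_ne_zero hn (by omega)]
  · rw [psiL, SatisfiesHeckeRelations.lift_HT, Nat.zero_mod]
    rfl

lemma IsPsiL.eq {f g : Hecke k →ₐ[R] Hecke n} (hf : IsPsiL n k hn f) (hg : IsPsiL n k hn g) :
    f = g := by
  refine Hecke.algHom_ext (fun hk i hik => ?_) (hf.2.2.trans hg.2.2.symm)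
  obtain rfl | hi := eq_or_ne i 0
  · rw [hf.2.1 hk, hg.2.1 hk]
  · rw [hf.1 hk i (by omega) (by omega), hg.1 hk i (by omega) (by omega)]

end PsiL

section PsiR
variable {n k : ℕ} (hn : 2 ≤ n)

def psiRT (k j : ℕ) : Hecke n :=
  if j = 0 then Tasc hn 0 (k - 1) * HT hn k * TinvDesc hn (k - 1) 0 else HT hn (k + j)

def psiRRho (k : ℕ) : (Hecke n)ˣ := (unitTasc hn 1 k)⁻¹ * unitRho n

lemma psiRT_of_ne_zero {j : ℕ} (hj : j ≠ 0) : psiRT hn k j = HT hn (k + j) := if_neg hj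

lemma psiRT_zero (hk : 1 ≤ k) (hkn : k + 2 ≤ n) :
    psiRT hn k 0 = ↑(unitTasc hn 1 k)⁻¹ * HT hn 0 * unitTasc hn 1 k := by
  have := Tasc_mul_HT_mul_TinvDesc hn (a := 0) (b := k - 1) (by omega) (by omega)
  rwa [Nat.sub_add_cancel hk] at this

lemma semiconjBy_psiRRho_psiRT_zero (hk : 1 ≤ k) (hkn : k + 2 ≤ n) :
    SemiconjBy (psiRRho hn k : Hecke n) (psiRT hn k 0) (HT hn (k + 1)) := by
  set V := unitTasc hn 1 k
  set V' := unitTasc hn 2 (k + 1)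
  have hconj : (V : Hecke n) * HT hn (k + 1) * ↑V⁻¹ = ↑V'⁻¹ * HT hn 1 * V' :=
    Tasc_mul_HT_mul_TinvDesc hn (a := 1) (b := k) hk (by omega)
  have hV : SemiconjBy (↑V⁻¹ : Hecke n) (↑V'⁻¹ * HT hn 1 * V') (HT hn (k + 1)) := by
    rw [SemiconjBy, ← hconj, ← mul_assoc, ← mul_assoc, Units.inv_mul, one_mul]
  have hρV : SemiconjBy (Hrho n) (V : Hecke n) V' := semiconjBy_rho_Tasc hn
  rw [psiRT_zero hn hk hkn]
  exact hV.mul_left ((hρV.units_inv_right.mul_right (semiconjBy_rho_HT hn 0)).mul_right hρV)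

lemma semiconjBy_psiRRho_HT {j : ℕ} (hj : 1 ≤ j) (hjn : k + j + 2 ≤ n) :
    SemiconjBy (psiRRho hn k : Hecke n) (HT hn (k + j)) (HT hn (k + (j + 1))) :=
  SemiconjBy.mul_left
    (commute_Tasc hn fun _ _ _ => (HT_commute hn (by omega) (by omega)).symm).symm.units_inv_left
    (semiconjBy_rho_HT hn (k + j))

lemma semiconjBy_psiRRho_HT_last (hk : 1 ≤ k) (hkn : k + 2 ≤ n) :
    SemiconjBy (psiRRho hn k : Hecke n) (HT hn (n - 1)) (psiRT hn k 0) := by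
  set V := unitTasc hn 1 k
  have hV : SemiconjBy (↑V⁻¹ : Hecke n) (HT hn 0) (↑V⁻¹ * HT hn 0 * V) := by
    rw [SemiconjBy, Units.mul_inv_cancel_right]
  have hρT : SemiconjBy (Hrho n) (HT hn (n - 1)) (HT hn 0) := by
    have := semiconjBy_rho_HT hn (n - 1)
    rwa [Nat.sub_add_cancel (by omega), HT_self] at this
  rw [psiRT_zero hn hk hkn]
  exact hV.mul_left hρT

lemma satisfiesHeckeRelations_psiR (hk : 1 ≤ k) :
    SatisfiesHeckeRelations (n - k) (psiRT hn k) (psiRRho hn k) where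
  semiconj hm j hj := by
    obtain rfl | hj0 := eq_or_ne j 0
    · rw [zero_add, Nat.mod_eq_of_lt (by omega), psiRT_of_ne_zero hn one_ne_zero]
      exact semiconjBy_psiRRho_psiRT_zero hn hk (by omega)
    obtain hjm | hjm := Nat.lt_or_ge (j + 1) (n - k)
    · rw [Nat.mod_eq_of_lt hjm, psiRT_of_ne_zero hn hj0, psiRT_of_ne_zero hn (by omega)]
      exact semiconjBy_psiRRho_HT hn (by omega) (by omega)
    · rw [show j + 1 = n - k by omega, Nat.mod_self, psiRT_of_ne_zero hn hj0,
        show k + j = n - 1 by omega]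
      exact semiconjBy_psiRRho_HT_last hn hk (by omega)
  quad _ := by
    rw [psiRT_of_ne_zero hn one_ne_zero]
    exact HT_quad hn (k + 1)
  braid hm := by
    rw [psiRT_of_ne_zero hn one_ne_zero, psiRT_of_ne_zero hn two_ne_zero]
    exact HT_braid (n := n) (by omega) (k + 1)
  commute j hj hjm := by
    rw [psiRT_of_ne_zero hn one_ne_zero, psiRT_of_ne_zero hn (by omega)]
    exact HT_commute hn (by omega) (by omega)

def psiR (hk : 1 ≤ k) : Hecke (n - k) →ₐ[R] Hecke n :=
  (satisfiesHeckeRelations_psiR hn hk).lift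

lemma isPsiR_psiR (hk : 1 ≤ k) : IsPsiR n k (n - k) hn (psiR hn hk) := by
  refine ⟨fun hm j hj hjm => ?_, fun hm => ?_, SatisfiesHeckeRelations.lift_rho _⟩
  · rw [psiR, SatisfiesHeckeRelations.lift_HT, Nat.mod_eq_of_lt (by omega),
      psiRT_of_ne_zero hn (by omega)]
  · rw [psiR, SatisfiesHeckeRelations.lift_HT, Nat.zero_mod]
    rfl

lemma IsPsiR.eq {m : ℕ} {f g : Hecke m →ₐ[R] Hecke n} (hf : IsPsiR n k m hn f)
    (hg : IsPsiR n k m hn g) : f = g := by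
  refine Hecke.algHom_ext (fun hm j hjm => ?_) (hf.2.2.trans hg.2.2.symm)
  obtain rfl | hj := eq_or_ne j 0
  · rw [hf.2.1 hm, hg.2.1 hm]
  · rw [hf.1 hm j (by omega) (by omega), hg.1 hm j (by omega) (by omega)]

end PsiR

/-- **Statement 6.**  For all `n ≥ 2` and `1 ≤ k ≤ n - 1`, there exist unique unital
`R`-algebra homomorphisms `ψ_L : Ĥ_k → Ĥ_n` and `ψ_R : Ĥ_{n-k} → Ĥ_n` satisfying the
prescribed values on the generators. -/
theorem statement_6 (n k : ℕ) (hn : 2 ≤ n) (hk1 : 1 ≤ k) (hk2 : k ≤ n - 1) :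
    (∃! f : Hecke k →ₐ[R] Hecke n, IsPsiL n k hn f) ∧
    (∃! g : Hecke (n - k) →ₐ[R] Hecke n, IsPsiR n k (n - k) hn g) :=
  ⟨⟨psiL hn hk2, isPsiL_psiL hn hk2, fun _ hf => hf.eq hn (isPsiL_psiL hn hk2)⟩,
    ⟨psiR hn hk1, isPsiR_psiR hn hk1, fun _ hg => hg.eq hn (isPsiR_psiR hn hk1)⟩⟩

end ParabolicInduction
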